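/- Let F ∈ S_d, L ∈ S_1 with nonzero X_0-coefficient, and f_L the dehomogenization of F_dp with respect to L. Then deg(f_L) ≤ d, and for any g ∈ k[y_1,…,y_n] of degree > deg(f_L), g ⌟ f_L = 0; hence the annihilator Ann^⌟(f_L) ⊆ k[y_1,…,y_n] under the contraction action is generated by its elements of degree at most deg(f_L)+1, i.e., it equals the ideal generated by the kernel of the truncated Hankel operator H^{e+1}(f_L) : k[y_1,…,y_n]_{≤e+1} → (k[x_1,…,x_n]_dp)_{≤e} with e = deg(f_L). -/

import Mathlib

open MvPolynomial

/-- The iterated differential operator `Y^β = ∏ᵢ ∂ᵢ^{βᵢ}`. -/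
noncomputable def diffOp {k : Type*} [CommSemiring k] {N : ℕ} (β : Fin N →₀ ℕ) :
    Module.End k (MvPolynomial (Fin N) k) :=
  (List.ofFn fun i : Fin N => ((MvPolynomial.pderiv i).toLinearMap :
      Module.End k (MvPolynomial (Fin N) k)) ^ (β i)).prod

/-- The apolarity action `G ∘ F` of `R = k[Y₀,…,Yₙ]` on `S = k[X₀,…,Xₙ]` by differentiation,
extended `k`-linearly from `Y^β ∘ X^α`. -/
noncomputable def apolar {k : Type*} [CommSemiring k] {N : ℕ}
    (G F : MvPolynomial (Fin N) k) : MvPolynomial (Fin N) k :=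
  ((AddMonoidAlgebra.coeff G).sum fun β c => c • diffOp β) F

/-- The factorial of a multi-index, `α! = ∏ᵢ αᵢ!`. -/
noncomputable def mfact {N : ℕ} (α : Fin N →₀ ℕ) : ℕ := α.prod fun _ m => m.factorial
open Classical in
/-- The contraction action `y^β ⌟ x^α = x^{α-β}` (if `α ⪰ β`, else `0`), extended bilinearly. -/
noncomputable def contract {k : Type*} [CommSemiring k] {N : ℕ}
    (G F : MvPolynomial (Fin N) k) : MvPolynomial (Fin N) k :=
  (AddMonoidAlgebra.coeff G).sum fun β c => (AddMonoidAlgebra.coeff F).sum fun α a =>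
    if β ≤ α then (c * a) • monomial (α - β) (1 : k) else 0

/-- The divided-power normalization `F ↦ F_dp`, `X^α ↦ X^α/α!` coefficientwise. -/
noncomputable def dp {k : Type*} [Field k] {N : ℕ}
    (F : MvPolynomial (Fin N) k) : MvPolynomial (Fin N) k :=
  (AddMonoidAlgebra.coeff F).sum fun α a => monomial α (a / (mfact α : k))


section Aux
variable {k : Type*} [CommSemiring k] {N : ℕ}

lemma fdeg_mono {β α : Fin N →₀ ℕ} (h : β ≤ α) : β.degree ≤ α.degree := by
  classical
  rw [Finsupp.degree_apply, Finsupp.degree_apply]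
  calc ∑ i ∈ β.support, β i
      ≤ ∑ i ∈ β.support ∪ α.support, β i :=
        Finset.sum_le_sum_of_subset Finset.subset_union_left
    _ ≤ ∑ i ∈ β.support ∪ α.support, α i :=
        Finset.sum_le_sum fun i _ => Finsupp.le_def.mp h i
    _ = ∑ i ∈ α.support, α i :=
        (Finset.sum_subset Finset.subset_union_right
          (fun i _ hi => Finsupp.notMem_support_iff.mp hi)).symm

lemma fdeg_eq_sum (α : Fin N →₀ ℕ) : α.degree = α.sum fun _ e => e := rfl

lemma contract_zero_left (F : MvPolynomial (Fin N) k) : contract 0 F = 0 := by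
  unfold contract; exact Finsupp.sum_zero_index (h := fun (β : Fin N →₀ ℕ) (c : k) => _)

lemma contract_zero_right (G : MvPolynomial (Fin N) k) : contract G 0 = 0 := by
  unfold contract
  simp only [AddMonoidAlgebra.coeff_zero, Finsupp.sum_zero_index, Finsupp.sum, Finset.sum_const_zero,
    Finsupp.support_zero, Finset.sum_empty]

lemma contract_add_left (G₁ G₂ F : MvPolynomial (Fin N) k) :
    contract (G₁ + G₂) F = contract G₁ F + contract G₂ F := by
  unfold contract
  rw [AddMonoidAlgebra.coeff_add, Finsupp.sum_add_index]
  · intro β _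
    simp only [zero_mul, zero_smul, ite_self, Finsupp.sum, Finset.sum_const_zero]
  · intro β _ c₁ c₂
    rw [← Finsupp.sum_add]
    congr 1; ext α a
    split
    · rw [add_mul, add_smul]
    · rw [add_zero]

lemma contract_add_right (G F₁ F₂ : MvPolynomial (Fin N) k) :
    contract G (F₁ + F₂) = contract G F₁ + contract G F₂ := by
  unfold contract
  rw [← Finsupp.sum_add]
  congr 1; ext β c
  rw [AddMonoidAlgebra.coeff_add, Finsupp.sum_add_index]
  · intro α _
    simp only [mul_zero, zero_smul, ite_self]
  · intro α _ a₁ a₂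
    split
    · rw [mul_add, add_smul]
    · rw [add_zero]

open Classical in
lemma contract_monomial_monomial (β α : Fin N →₀ ℕ) (c a : k) :
    contract (monomial β c) (monomial α a)
      = if β ≤ α then (c * a) • monomial (α - β) (1 : k) else 0 := by
  unfold contract
  rw [sum_monomial_eq, sum_monomial_eq]
  · simp only [mul_zero, zero_smul, ite_self]
  · simp only [zero_mul, zero_smul, ite_self, Finsupp.sum, Finset.sum_const_zero]

end Aux

section Aux2
variable {k : Type*} [CommSemiring k] {N : ℕ}

lemma contract_monomial_mul (β β' : Fin N →₀ ℕ) (c c' : k) (F : MvPolynomial (Fin N) k) :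
    contract (monomial β c * monomial β' c') F
      = contract (monomial β c) (contract (monomial β' c') F) := by
  induction F using MvPolynomial.induction_on' with
  | add p q hp hq =>
    rw [contract_add_right, contract_add_right, contract_add_right, hp, hq]
  | monomial α a =>
    rw [monomial_mul, contract_monomial_monomial, contract_monomial_monomial]
    by_cases h' : β' ≤ α
    · rw [if_pos h']
      have hmon : (c' * a) • (monomial (α - β') (1:k)) = monomial (α - β') (c' * a) := by
        rw [smul_monomial, smul_eq_mul, mul_one]
      rw [hmon, contract_monomial_monomial]
      by_cases h : β + β' ≤ α
      · have hb : β ≤ α - β' := by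
          rw [Finsupp.le_def] at h ⊢
          intro i
          simp only [Finsupp.tsub_apply]
          have := h i
          simp only [Finsupp.add_apply] at this
          omega
        have he : α - (β + β') = α - β' - β := by
          ext i
          simp only [Finsupp.tsub_apply, Finsupp.add_apply]
          omega
        rw [if_pos h, if_pos hb, he, mul_assoc]
      · have hb : ¬ β ≤ α - β' := by
          intro hc
          apply h
          rw [Finsupp.le_def] at hc h' ⊢
          intro i
          have h1 := hc i
          have h2 := h' i
          simp only [Finsupp.tsub_apply] at h1
          simp only [Finsupp.add_apply]
          omega
        rw [if_neg h, if_neg hb]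
    · have hb : ¬ β + β' ≤ α := fun hc => h' (le_trans (le_add_self) hc)
      rw [if_neg hb, if_neg h', contract_zero_right]

lemma contract_mul (P G F : MvPolynomial (Fin N) k) :
    contract (P * G) F = contract P (contract G F) := by
  induction P using MvPolynomial.induction_on' with
  | add p q hp hq =>
    rw [add_mul, contract_add_left, contract_add_left, hp, hq]
  | monomial β c =>
    induction G using MvPolynomial.induction_on' with
    | monomial β' c' => exact contract_monomial_mul β β' c c' F
    | add p q hp hq =>
      rw [mul_add, contract_add_left, contract_add_left, hp, hq, contract_add_right]

lemma contract_sum_left {ι : Type*} (s : Finset ι) (P : ι → MvPolynomial (Fin N) k)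
    (F : MvPolynomial (Fin N) k) :
    contract (∑ i ∈ s, P i) F = ∑ i ∈ s, contract (P i) F := by
  classical
  induction s using Finset.induction_on with
  | empty => simp [contract_zero_left]
  | insert _ _ h ih =>
    rw [Finset.sum_insert h, Finset.sum_insert h, contract_add_left, ih]

/-- Vanishing: homogeneous of degree bigger than totalDegree contracts to zero. -/
lemma contract_eq_zero_of_isHomogeneous {f g : MvPolynomial (Fin N) k} {m : ℕ}
    (hm : f.totalDegree < m) (hg : g.IsHomogeneous m) : contract g f = 0 := by
  unfold contract
  apply Finset.sum_eq_zero
  intro β hβ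
  apply Finset.sum_eq_zero
  intro α hα
  have hβd : β.degree = m := by
    rw [Finsupp.degree_eq_weight_one]
    exact hg (MvPolynomial.mem_support_iff.mp hβ)
  have hαd : α.degree ≤ f.totalDegree := by
    rw [fdeg_eq_sum]
    exact le_totalDegree hα
  dsimp only
  rw [if_neg]
  intro hle
  have := fdeg_mono hle
  omega

end Aux2

section Aux3
variable {k : Type*} [CommSemiring k] {N : ℕ}

lemma exists_le_degree (β : Fin N →₀ ℕ) (t : ℕ) (ht : t ≤ β.degree) :
    ∃ β' : Fin N →₀ ℕ, β' ≤ β ∧ β'.degree = t := by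
  induction t with
  | zero => exact ⟨0, zero_le, map_zero _⟩
  | succ t ih =>
    obtain ⟨β', hle, hdeg⟩ := ih (Nat.le_of_succ_le ht)
    have hne : ∃ i, β' i < β i := by
      by_contra hc
      push_neg at hc
      have hba : β ≤ β' := Finsupp.le_def.mpr hc
      have := fdeg_mono hba
      omega
    obtain ⟨i, hi⟩ := hne
    refine ⟨β' + Finsupp.single i 1, ?_, ?_⟩
    · rw [Finsupp.le_def]
      intro j
      have hj := Finsupp.le_def.mp hle j
      simp only [Finsupp.add_apply, Finsupp.single_apply]
      by_cases h : i = j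
      · subst h; rw [if_pos rfl]; omega
      · rw [if_neg h]; omega
    · rw [fdeg_eq_sum, Finsupp.sum_add_index' (fun _ => rfl) (fun _ _ _ => rfl),
        ← fdeg_eq_sum, ← fdeg_eq_sum, hdeg]
      have : (Finsupp.single i 1 : Fin N →₀ ℕ).degree = 1 := by
        rw [fdeg_eq_sum, Finsupp.sum_single_index rfl]
      omega

lemma totalDegree_aeval_le' {σ τ : Type*} (g : σ → MvPolynomial τ k)
    (hg : ∀ i, (g i).totalDegree ≤ 1) (p : MvPolynomial σ k) :
    (aeval g p).totalDegree ≤ p.totalDegree := by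
  rw [aeval_def, eval₂_eq]
  refine (totalDegree_finset_sum _ _).trans (Finset.sup_le fun dd hdd => ?_)
  refine (totalDegree_mul _ _).trans ?_
  have h1 : (algebraMap k (MvPolynomial τ k) (coeff dd p)).totalDegree = 0 := by
    rw [MvPolynomial.algebraMap_eq]; exact totalDegree_C _
  have h2 : (∏ i ∈ dd.support, g i ^ dd i).totalDegree ≤ ∑ i ∈ dd.support, dd i := by
    refine (totalDegree_finset_prod _ _).trans (Finset.sum_le_sum fun i _ => ?_)
    refine (totalDegree_pow _ _).trans ?_
    calc dd i * (g i).totalDegree ≤ dd i * 1 := Nat.mul_le_mul_left _ (hg i)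
      _ = dd i := mul_one _
  rw [h1, zero_add]
  refine h2.trans ?_
  have : (∑ i ∈ dd.support, dd i) = dd.sum fun _ e => e := rfl
  rw [this]
  exact le_totalDegree hdd

lemma ann_span (f : MvPolynomial (Fin N) k) :
    {g : MvPolynomial (Fin N) k | contract g f = 0}
      = ((Ideal.span {g : MvPolynomial (Fin N) k |
          g.totalDegree ≤ f.totalDegree + 1 ∧ contract g f = 0} :
        Ideal (MvPolynomial (Fin N) k)) : Set (MvPolynomial (Fin N) k)) := by
  classical
  ext g
  simp only [Set.mem_setOf_eq, SetLike.mem_coe]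
  set e := f.totalDegree with he
  set S : Set (MvPolynomial (Fin N) k) :=
    {g : MvPolynomial (Fin N) k | g.totalDegree ≤ e + 1 ∧ contract g f = 0} with hS
  constructor
  · intro hg
    set g1 := ∑ β ∈ g.support.filter (fun β => β.degree ≤ e + 1), monomial β (coeff β g) with hg1
    set g2 := ∑ β ∈ g.support.filter (fun β => ¬ β.degree ≤ e + 1), monomial β (coeff β g)
      with hgdef2
    have hsplit : g = g1 + g2 := by
      rw [hg1, hgdef2, Finset.sum_filter_add_sum_filter_not]
      exact (support_sum_monomial_coeff g).symm
    have hg2mem : ∀ β ∈ g.support.filter (fun β => ¬ β.degree ≤ e + 1),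
        monomial β (coeff β g) ∈ Ideal.span S := by
      intro β hβ
      have hdβ : e + 1 < β.degree := by
        have := (Finset.mem_filter.mp hβ).2
        omega
      obtain ⟨β', hle, hdeg⟩ := exists_le_degree β (e + 1) (le_of_lt hdβ)
      have hmem : monomial β' (1 : k) ∈ S := by
        constructor
        · refine (totalDegree_monomial_le _ _).trans ?_
          simp only [Function.id_def]
          rw [← fdeg_eq_sum, hdeg]
        · exact contract_eq_zero_of_isHomogeneous
            (by omega : f.totalDegree < e + 1) (isHomogeneous_monomial _ hdeg)
      have hfact : monomial β (coeff β g) = monomial (β - β') (coeff β g) * monomial β' 1 := by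
        rw [monomial_mul, mul_one, tsub_add_cancel_of_le hle]
      rw [hfact]
      exact Ideal.mul_mem_left _ _ (Ideal.subset_span hmem)
    have hg2span : g2 ∈ Ideal.span S := Ideal.sum_mem _ hg2mem
    have hg2ann : contract g2 f = 0 := by
      rw [hgdef2, contract_sum_left]
      refine Finset.sum_eq_zero fun β hβ => ?_
      have hdβ : e + 1 < β.degree := by
        have := (Finset.mem_filter.mp hβ).2
        omega
      exact contract_eq_zero_of_isHomogeneous
        (by omega : f.totalDegree < β.degree) (isHomogeneous_monomial _ rfl)
    have hg1ann : contract g1 f = 0 := by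
      have h := hg
      rw [hsplit, contract_add_left, hg2ann, add_zero] at h
      exact h
    have hg1deg : g1.totalDegree ≤ e + 1 := by
      rw [hg1]
      refine (totalDegree_finset_sum _ _).trans (Finset.sup_le fun β hβ => ?_)
      refine (totalDegree_monomial_le _ _).trans ?_
      simp only [Function.id_def]
      rw [← fdeg_eq_sum]
      exact (Finset.mem_filter.mp hβ).2
    have hg1span : g1 ∈ Ideal.span S := Ideal.subset_span ⟨hg1deg, hg1ann⟩
    rw [hsplit]
    exact Ideal.add_mem _ hg1span hg2span
  · intro hg
    refine Submodule.span_induction (fun x hx => hx.2) (contract_zero_left f)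
      (fun x y _ _ hx hy => by rw [contract_add_left, hx, hy, add_zero])
      (fun a x _ hx => by rw [smul_eq_mul, contract_mul, hx, contract_zero_right]) hg

end Aux3

lemma dp_totalDegree_le {k : Type*} [Field k] {N d : ℕ} {P : MvPolynomial (Fin N) k}
    (h : P.IsHomogeneous d) : (dp P).totalDegree ≤ d := by
  unfold dp
  refine (totalDegree_finset_sum _ _).trans (Finset.sup_le fun α hα => ?_)
  refine (totalDegree_monomial_le _ _).trans ?_
  simp only [Function.id_def]
  rw [← fdeg_eq_sum, Finsupp.degree_eq_weight_one]
  exact le_of_eq (h (MvPolynomial.mem_support_iff.mp hα))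

/-- Let `F ∈ S_d`, `L ∈ S₁` with nonzero `X₀`-coefficient, and let `f_L` be the
dehomogenization of `F_dp` with respect to `L` (obtained by moving `L` to `X₀` and setting
`X₀ = 1`). Then `deg f_L ≤ d`; every homogeneous `g` of degree `> deg f_L` contracts `f_L`
to `0`; and `Ann^⌟(f_L)` is the ideal generated by the kernel of the truncated Hankel
operator in degrees `≤ deg f_L + 1`. -/
theorem stmt_19 {k : Type*} [Field k] [CharZero k] {n d : ℕ}
    (F L : MvPolynomial (Fin (n + 1)) k)
    (hF : F ∈ homogeneousSubmodule (Fin (n + 1)) k d)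
    (hL : L ∈ homogeneousSubmodule (Fin (n + 1)) k 1)
    (h0 : coeff (Finsupp.single 0 1) L ≠ 0)
    (φ : MvPolynomial (Fin (n + 1)) k →ₐ[k] MvPolynomial (Fin (n + 1)) k)
    (hφ : φ = aeval (fun i : Fin (n + 1) =>
      Fin.cases
        (C (coeff (Finsupp.single 0 1) L)⁻¹ *
          (X 0 - ∑ j : Fin n, C (coeff (Finsupp.single j.succ 1) L) * X j.succ))
        (fun j : Fin n => X j.succ) i))
    (f : MvPolynomial (Fin n) k)
    (hf : f = aeval (fun i : Fin (n + 1) =>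
      Fin.cases (1 : MvPolynomial (Fin n) k) (fun j : Fin n => X j) i) (dp (φ F))) :
    f.totalDegree ≤ d
    ∧ (∀ (g : MvPolynomial (Fin n) k) (m : ℕ), f.totalDegree < m →
        g ∈ homogeneousSubmodule (Fin n) k m → contract g f = 0)
    ∧ {g : MvPolynomial (Fin n) k | contract g f = 0}
        = ((Ideal.span {g : MvPolynomial (Fin n) k |
            g.totalDegree ≤ f.totalDegree + 1 ∧ contract g f = 0} :
          Ideal (MvPolynomial (Fin n) k)) : Set (MvPolynomial (Fin n) k)) := by
  classical
  rw [mem_homogeneousSubmodule] at hF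
  have hφF : (φ F).IsHomogeneous d := by
    rw [hφ]
    have := hF.aeval (fun i : Fin (n + 1) =>
      Fin.cases
        (C (coeff (Finsupp.single 0 1) L)⁻¹ *
          (X 0 - ∑ j : Fin n, C (coeff (Finsupp.single j.succ 1) L) * X j.succ))
        (fun j : Fin n => X j.succ) i) (n := 1) ?_
    · simpa using this
    · intro i
      refine Fin.cases ?_ (fun j => ?_) i
      · simp only [Fin.cases_zero]
        exact IsHomogeneous.C_mul
          ((isHomogeneous_X _ _).sub (IsHomogeneous.sum _ _ _
            fun j _ => isHomogeneous_C_mul_X _ _)) _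
      · simp only [Fin.cases_succ]
        exact isHomogeneous_X _ _
  refine ⟨?_, ?_, ?_⟩
  · rw [hf]
    refine (totalDegree_aeval_le' _ ?_ _).trans (dp_totalDegree_le hφF)
    intro i
    refine Fin.cases ?_ (fun j => ?_) i
    · simp only [Fin.cases_zero, totalDegree_one]
      omega
    · simp only [Fin.cases_succ, totalDegree_X]
      exact le_refl 1
  · intro g m hm hg
    exact contract_eq_zero_of_isHomogeneous hm ((mem_homogeneousSubmodule _ _).mp hg)
  · exact ann_span f
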